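/- arXiv:2512.01227 — 3 statements merged into one kernel-verified Lean document; each statement's English description precedes it below -/
import Mathlib

section
/- If P = B_1 ⊠ ⋯ ⊠ B_d with all B_k nonsingular n × n matrices, then for every n^d × n^d matrix M and every κ ⊆ [d], rank((PM)^{⊤_κ}) = rank(M^{⊤_κ}). Consequently, PT-rank is invariant under left multiplication by Kronecker products of invertible n × n matrices. -/
open Matrix BigOperators

/-- The `κ`-partial transpose of an `n^d × n^d` matrix (indexed by tuples in `[n]^d`). -/
def ptrans {F : Type*} [Field F] {n d : ℕ} (κ : Finset (Fin d))
    (M : Matrix (Fin d → Fin n) (Fin d → Fin n) F) :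
    Matrix (Fin d → Fin n) (Fin d → Fin n) F :=
  fun i j => M (fun k => if k ∈ κ then j k else i k) (fun k => if k ∈ κ then i k else j k)

/-- A matrix is PT-basic if some partial transpose of it has rank 1. -/
def IsPTBasic {F : Type*} [Field F] {n d : ℕ}
    (M : Matrix (Fin d → Fin n) (Fin d → Fin n) F) : Prop :=
  ∃ κ : Finset (Fin d), (ptrans κ M).rank = 1

/-- The PT-rank of `M`: the minimum number of PT-basic matrices summing to `M`. -/
noncomputable def PTrank {F : Type*} [Field F] {n d : ℕ}
    (M : Matrix (Fin d → Fin n) (Fin d → Fin n) F) : ℕ :=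
  sInf { r | ∃ P : Fin r → Matrix (Fin d → Fin n) (Fin d → Fin n) F,
    (∀ i, IsPTBasic (P i)) ∧ M = ∑ i, P i }

/-- The Kronecker product `B_1 ⊠ ⋯ ⊠ B_d` of `d` matrices of size `n × n`,
written as a matrix indexed by tuples in `[n]^d`. -/
def kron {F : Type*} [Field F] {n d : ℕ} (B : Fin d → Matrix (Fin n) (Fin n) F) :
    Matrix (Fin d → Fin n) (Fin d → Fin n) F :=
  fun i j => ∏ k, B k (i k) (j k)

section Aux

variable {F : Type*} [Field F] {n d : ℕ}

/-- Merge two tuples along `κ`: take `b` on `κ` and `a` off `κ`. -/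
def sw (κ : Finset (Fin d)) (a b : Fin d → Fin n) : Fin d → Fin n :=
  fun k => if k ∈ κ then b k else a k

lemma ptrans_apply (κ : Finset (Fin d)) (M : Matrix (Fin d → Fin n) (Fin d → Fin n) F)
    (i j : Fin d → Fin n) : ptrans κ M i j = M (sw κ i j) (sw κ j i) := rfl

lemma sw_sw (κ : Finset (Fin d)) (a b : Fin d → Fin n) :
    sw κ (sw κ a b) (sw κ b a) = a := by
  funext k; by_cases h : k ∈ κ <;> simp [sw, h]

/-- The self-inverse pair-swap equivalence. -/
def swEquiv (κ : Finset (Fin d)) :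
    ((Fin d → Fin n) × (Fin d → Fin n)) ≃ ((Fin d → Fin n) × (Fin d → Fin n)) where
  toFun p := (sw κ p.1 p.2, sw κ p.2 p.1)
  invFun p := (sw κ p.1 p.2, sw κ p.2 p.1)
  left_inv p := by cases p with | mk a b => simp [sw_sw]
  right_inv p := by cases p with | mk a b => simp [sw_sw]

lemma kron_mul (B C : Fin d → Matrix (Fin n) (Fin n) F) :
    kron B * kron C = kron (fun k => B k * C k) := by
  ext i j
  simp only [Matrix.mul_apply, kron, ← Finset.prod_mul_distrib]
  rw [Finset.prod_univ_sum, Fintype.piFinset_univ]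

lemma kron_one : kron (fun _ : Fin d => (1 : Matrix (Fin n) (Fin n) F)) = 1 := by
  ext i j
  by_cases h : i = j
  · subst h; simp [kron, Matrix.one_apply]
  · have : ∃ k, i k ≠ j k := by
      by_contra hc; push_neg at hc; exact h (funext hc)
    obtain ⟨k, hk⟩ := this
    rw [Matrix.one_apply_ne h]
    exact Finset.prod_eq_zero (Finset.mem_univ k) (Matrix.one_apply_ne hk)

lemma kron_isUnit {B : Fin d → Matrix (Fin n) (Fin n) F} (hB : ∀ k, IsUnit (B k)) :
    IsUnit (kron B) := by
  have hd : ∀ k, IsUnit (B k).det := fun k => (Matrix.isUnit_iff_isUnit_det _).mp (hB k)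
  have h1 : kron B * kron (fun k => (B k)⁻¹) = 1 := by
    rw [kron_mul]
    have he : (fun k => B k * (B k)⁻¹) = fun _ : Fin d => (1 : Matrix (Fin n) (Fin n) F) :=
      funext fun k => Matrix.mul_nonsing_inv _ (hd k)
    rw [he, kron_one]
  exact ⟨⟨kron B, kron (fun k => (B k)⁻¹), h1, mul_eq_one_comm.mp h1⟩, rfl⟩

end Aux

section Key
variable {F : Type*} [Field F] {n d : ℕ}

lemma ptrans_kron_mul (κ : Finset (Fin d)) (B : Fin d → Matrix (Fin n) (Fin n) F)
    (M : Matrix (Fin d → Fin n) (Fin d → Fin n) F) :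
    ptrans κ (kron B * M) =
      kron (fun k => if k ∈ κ then 1 else B k) * ptrans κ M *
        kron (fun k => if k ∈ κ then (B k)ᵀ else 1) := by
  set P₁ : Matrix (Fin d → Fin n) (Fin d → Fin n) F :=
    kron (fun k => if k ∈ κ then 1 else B k) with hP₁
  set P₂ : Matrix (Fin d → Fin n) (Fin d → Fin n) F :=
    kron (fun k => if k ∈ κ then (B k)ᵀ else 1) with hP₂
  set N := ptrans κ M with hN
  ext i j
  have hR : (P₁ * N * P₂) i j
      = ∑ p : (Fin d → Fin n) × (Fin d → Fin n), P₁ i p.1 * N p.1 p.2 * P₂ p.2 j := by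
    rw [Fintype.sum_prod_type_right]
    simp only [Matrix.mul_apply, Finset.sum_mul]
  rw [hR, ← Equiv.sum_comp (swEquiv κ)
    (fun p : (Fin d → Fin n) × (Fin d → Fin n) => P₁ i p.1 * N p.1 p.2 * P₂ p.2 j),
    Fintype.sum_prod_type]
  simp only [swEquiv, Equiv.coe_fn_mk]
  have key : ∀ x : Fin d → Fin n,
      (∑ y : Fin d → Fin n, P₁ i (sw κ x y) * N (sw κ x y) (sw κ y x) * P₂ (sw κ y x) j)
      = kron B (sw κ i j) x * M x (sw κ j i) := by
    intro x
    rw [Finset.sum_eq_single (sw κ j i)]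
    · have h1 : sw κ x (sw κ j i) = sw κ x i := by
        funext k; by_cases h : k ∈ κ <;> simp [sw, h]
      have h2 : sw κ (sw κ j i) x = sw κ j x := by
        funext k; by_cases h : k ∈ κ <;> simp [sw, h]
      rw [h1, h2]
      have hNv : N (sw κ x i) (sw κ j x) = M x (sw κ j i) := by
        rw [hN, ptrans_apply]
        congr 1 <;> (funext k; by_cases h : k ∈ κ <;> simp [sw, h])
      have hP1v : P₁ i (sw κ x i) = ∏ k, (if k ∈ κ then 1 else B k (i k) (x k)) := by
        rw [hP₁]
        refine Finset.prod_congr rfl fun k _ => ?_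
        by_cases h : k ∈ κ <;> simp [sw, h, Matrix.one_apply]
      have hP2v : P₂ (sw κ j x) j = ∏ k, (if k ∈ κ then B k (j k) (x k) else 1) := by
        rw [hP₂]
        refine Finset.prod_congr rfl fun k _ => ?_
        by_cases h : k ∈ κ <;> simp [sw, h, Matrix.one_apply, Matrix.transpose_apply]
      rw [hNv, hP1v, hP2v, mul_right_comm]
      congr 1
      rw [← Finset.prod_mul_distrib]
      refine Finset.prod_congr rfl fun k _ => ?_
      by_cases h : k ∈ κ <;> simp [kron, sw, h]
    · intro y _ hy
      have : ∃ k, y k ≠ sw κ j i k := by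
        by_contra hc; push_neg at hc; exact hy (funext hc)
      obtain ⟨k, hk⟩ := this
      by_cases h : k ∈ κ
      · have hk' : i k ≠ sw κ x y k := by simp [sw, h] at hk ⊢; exact fun e => hk e.symm
        have : P₁ i (sw κ x y) = 0 := by
          refine Finset.prod_eq_zero (Finset.mem_univ k) ?_
          simp [h, Matrix.one_apply_ne hk']
        rw [this, zero_mul, zero_mul]
      · have hk' : sw κ y x k ≠ j k := by simp [sw, h] at hk ⊢; exact hk
        have : P₂ (sw κ y x) j = 0 := by
          refine Finset.prod_eq_zero (Finset.mem_univ k) ?_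
          simp [h, Matrix.one_apply_ne hk']
        rw [this, mul_zero]
    · intro hmem; exact absurd (Finset.mem_univ _) hmem
  calc ptrans κ (kron B * M) i j = ∑ x, kron B (sw κ i j) x * M x (sw κ j i) := by
        rw [ptrans_apply, Matrix.mul_apply]
    _ = ∑ x, ∑ y, P₁ i (sw κ x y) * N (sw κ x y) (sw κ y x) * P₂ (sw κ y x) j :=
        (Finset.sum_congr rfl fun x _ => (key x).symm)

end Key

section Final
variable {F : Type*} [Field F] {n d : ℕ}

lemma rank_ptrans_kron_mul {B : Fin d → Matrix (Fin n) (Fin n) F}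
    (hB : ∀ k, IsUnit (B k)) (M : Matrix (Fin d → Fin n) (Fin d → Fin n) F)
    (κ : Finset (Fin d)) :
    (ptrans κ (kron B * M)).rank = (ptrans κ M).rank := by
  have h1 : ∀ k, IsUnit ((fun k => if k ∈ κ then 1 else B k) k : Matrix (Fin n) (Fin n) F) := by
    intro k; by_cases h : k ∈ κ <;> simp [h, hB k]
  have h2 : ∀ k, IsUnit ((fun k => if k ∈ κ then (B k)ᵀ else 1) k : Matrix (Fin n) (Fin n) F) := by
    intro k; by_cases h : k ∈ κ
    · simpa [h, Matrix.isUnit_iff_isUnit_det, Matrix.det_transpose]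
        using (Matrix.isUnit_iff_isUnit_det _).mp (hB k)
    · simp [h]
  have hd1 := (Matrix.isUnit_iff_isUnit_det _).mp (kron_isUnit h1)
  have hd2 := (Matrix.isUnit_iff_isUnit_det _).mp (kron_isUnit h2)
  rw [ptrans_kron_mul, Matrix.rank_mul_eq_left_of_isUnit_det _ _ hd2,
    Matrix.rank_mul_eq_right_of_isUnit_det _ _ hd1]

lemma isPTBasic_kron_mul {B : Fin d → Matrix (Fin n) (Fin n) F}
    (hB : ∀ k, IsUnit (B k)) {P : Matrix (Fin d → Fin n) (Fin d → Fin n) F}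
    (hP : IsPTBasic P) : IsPTBasic (kron B * P) := by
  obtain ⟨κ, hκ⟩ := hP
  exact ⟨κ, by rw [rank_ptrans_kron_mul hB P κ, hκ]⟩

lemma decomp_subset (B : Fin d → Matrix (Fin n) (Fin n) F)
    (hB : ∀ k, IsUnit (B k)) (M : Matrix (Fin d → Fin n) (Fin d → Fin n) F) :
    { r | ∃ P : Fin r → Matrix (Fin d → Fin n) (Fin d → Fin n) F,
      (∀ i, IsPTBasic (P i)) ∧ M = ∑ i, P i } ⊆
    { r | ∃ P : Fin r → Matrix (Fin d → Fin n) (Fin d → Fin n) F,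
      (∀ i, IsPTBasic (P i)) ∧ kron B * M = ∑ i, P i } := by
  rintro r ⟨P, hP, rfl⟩
  exact ⟨fun i => kron B * P i, fun i => isPTBasic_kron_mul hB (hP i),
    by rw [Finset.mul_sum]⟩

theorem stmt5' {B : Fin d → Matrix (Fin n) (Fin n) F}
    (hB : ∀ k, IsUnit (B k)) (M : Matrix (Fin d → Fin n) (Fin d → Fin n) F) :
    (∀ κ : Finset (Fin d), (ptrans κ (kron B * M)).rank = (ptrans κ M).rank) ∧
    PTrank (kron B * M) = PTrank M := by
  refine ⟨fun κ => rank_ptrans_kron_mul hB M κ, ?_⟩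
  have hd : ∀ k, IsUnit (B k).det := fun k => (Matrix.isUnit_iff_isUnit_det _).mp (hB k)
  have hC : ∀ k, IsUnit ((B k)⁻¹) := fun k => Matrix.isUnit_nonsing_inv_iff.mpr (hB k)
  have hCB : kron (fun k => (B k)⁻¹) * (kron B * M) = M := by
    rw [← mul_assoc, kron_mul]
    have he : (fun k => (B k)⁻¹ * B k) = fun _ : Fin d => (1 : Matrix (Fin n) (Fin n) F) :=
      funext fun k => Matrix.nonsing_inv_mul _ (hd k)
    rw [he, kron_one, one_mul]
  unfold PTrank
  congr 1
  apply Set.Subset.antisymm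
  · have := decomp_subset (fun k => (B k)⁻¹) hC (kron B * M)
    rwa [hCB] at this
  · exact decomp_subset B hB M

end Final

/-- If `P = B_1 ⊠ ⋯ ⊠ B_d` with all `B_k` nonsingular, then
`rank((PM)^{⊤_κ}) = rank(M^{⊤_κ})` for every `κ`, and consequently
`PT-rank(PM) = PT-rank(M)`. -/
theorem stmt5 {F : Type*} [Field F] {n d : ℕ} (B : Fin d → Matrix (Fin n) (Fin n) F)
    (hB : ∀ k, IsUnit (B k)) (M : Matrix (Fin d → Fin n) (Fin d → Fin n) F) :
    (∀ κ : Finset (Fin d), (ptrans κ (kron B * M)).rank = (ptrans κ M).rank) ∧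
    PTrank (kron B * M) = PTrank M := by
  exact stmt5' hB M
end

section
/- Over a finite field F, for every constant ε > 0, the fraction of n^d × n^d matrices with PT-rank at most (1/2 − ε)n^d tends to 0 as n → ∞; i.e., asymptotically almost all n^d × n^d matrices over F have PT-rank at least (1/2 − ε)n^d. -/
open Matrix BigOperators

/-!
Every PT-basic matrix is a partial transpose `ptrans κ (u vᵀ)` of a rank-one matrix, and
padding with zero terms is free, so every matrix of PT-rank at most `r` is a sum of exactly `r`
such terms. With `N = n^d` and `q = |F|`, there are at most `(2^d q^{2N})^r ≤ q^{(d + 2N) r}`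
choices of the triples `(κ, u, v)`. For `r ≤ (1/2 - ε) N` this is at most `q^{N² + dN - 2εN²}`,
a fraction `q^{dN - 2εN²} → 0` of all `q^{N²}` matrices.
-/
open Matrix Filter

section PartialTranspose

variable {F : Type*} [Field F] {n d : ℕ}

@[simp]
theorem ptrans_zero (κ : Finset (Fin d)) :
    ptrans κ (0 : Matrix (Fin d → Fin n) (Fin d → Fin n) F) = 0 := rfl

theorem ptrans_involutive (κ : Finset (Fin d)) :
    Function.Involutive (ptrans (F := F) (n := n) κ) := by
  intro M
  ext i j
  simp only [ptrans]
  congr 1 <;> funext k <;> split_ifs <;> rfl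

end PartialTranspose

theorem Matrix.eq_zero_of_rank_eq_zero {F m k : Type*} [Field F] [Fintype k] [DecidableEq k]
    {A : Matrix m k F} (h : A.rank = 0) : A = 0 := by
  have : LinearMap.range A.mulVecLin = ⊥ := Submodule.finrank_eq_zero.mp h
  rw [LinearMap.range_eq_bot, ← toLin'_apply'] at this
  exact toLin'.injective (this.trans toLin'.map_zero.symm)

theorem Matrix.exists_eq_vecMulVec_of_rank_eq_one {F m k : Type*} [Field F] [Fintype k]
    [DecidableEq k] {A : Matrix m k F} (h : A.rank = 1) : ∃ u v, A = vecMulVec u v := by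
  obtain ⟨w, -, hw⟩ := finrank_eq_one_iff'.mp h
  choose c hc using fun j => hw ⟨A.mulVec (Pi.single j 1), LinearMap.mem_range_self _ _⟩
  refine ⟨w.1, c, ?_⟩
  ext i j
  simpa [vecMulVec_apply, mul_comm] using (congrArg (fun x => x.1 i) (hc j)).symm

theorem Matrix.rank_single {F m k : Type*} [Field F] [Fintype m] [Fintype k] [DecidableEq m]
    [DecidableEq k] (i : m) (j : k) {c : F} (hc : c ≠ 0) : (single i j c).rank = 1 := by
  have hle : (single i j c).rank ≤ 1 := by
    have : single i j c = vecMulVec (c • Pi.single i 1) (Pi.single j 1) := by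
      rw [smul_vecMulVec, ← single_eq_single_vecMulVec_single, smul_single, smul_eq_mul, mul_one]
    rw [this]
    exact rank_vecMulVec_le _ _
  have hne : (single i j c).rank ≠ 0 := fun h => by
    simpa [hc] using congrFun (congrFun (eq_zero_of_rank_eq_zero h) i) j
  omega

section PTrank

variable {F : Type*} [Field F] {n d : ℕ}

theorem IsPTBasic.exists_eq_ptrans_vecMulVec {M : Matrix (Fin d → Fin n) (Fin d → Fin n) F}
    (h : IsPTBasic M) : ∃ κ u v, M = ptrans κ (vecMulVec u v) := by
  obtain ⟨κ, hκ⟩ := h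
  obtain ⟨u, v, huv⟩ := exists_eq_vecMulVec_of_rank_eq_one hκ
  exact ⟨κ, u, v, by rw [← huv, ptrans_involutive]⟩

theorem isPTBasic_single (i j : Fin d → Fin n) {c : F} (hc : c ≠ 0) :
    IsPTBasic (single i j c) :=
  ⟨∅, rank_single i j hc⟩

theorem exists_sum_isPTBasic (M : Matrix (Fin d → Fin n) (Fin d → Fin n) F) :
    ∃ r, ∃ P : Fin r → Matrix (Fin d → Fin n) (Fin d → Fin n) F,
      (∀ i, IsPTBasic (P i)) ∧ M = ∑ i, P i := by
  let S := {A | ∃ r, ∃ P : Fin r → Matrix (Fin d → Fin n) (Fin d → Fin n) F,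
    (∀ i, IsPTBasic (P i)) ∧ A = ∑ i, P i}
  have zero_mem : 0 ∈ S := ⟨0, 0, nofun, by simp⟩
  have add_mem (A B) (hA : A ∈ S) (hB : B ∈ S) : A + B ∈ S := by
    obtain ⟨r, P, hP, rfl⟩ := hA
    obtain ⟨s, Q, hQ, rfl⟩ := hB
    exact ⟨r + s, Fin.append P Q, Fin.addCases (by simpa using hP) (by simpa using hQ),
      by simp [Fin.sum_univ_add]⟩
  have single_mem (i j) : single i j (M i j) ∈ S := by
    by_cases hc : M i j = 0
    · simpa [hc] using zero_mem
    · exact ⟨1, fun _ => single i j (M i j), fun _ => isPTBasic_single i j hc, by simp⟩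
  rw [matrix_eq_sum_single M]
  exact Finset.sum_induction _ (· ∈ S) add_mem zero_mem fun i _ =>
    Finset.sum_induction _ (· ∈ S) add_mem zero_mem fun j _ => single_mem i j

theorem exists_sum_isPTBasic_PTrank (M : Matrix (Fin d → Fin n) (Fin d → Fin n) F) :
    ∃ P : Fin (PTrank M) → Matrix (Fin d → Fin n) (Fin d → Fin n) F,
      (∀ i, IsPTBasic (P i)) ∧ M = ∑ i, P i :=
  Nat.sInf_mem (exists_sum_isPTBasic M)

variable (F n d) in
def sumPTransVecMulVec (r : ℕ)
    (c : Fin r → Finset (Fin d) × ((Fin d → Fin n) → F) × ((Fin d → Fin n) → F)) :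
    Matrix (Fin d → Fin n) (Fin d → Fin n) F :=
  ∑ i, ptrans (c i).1 (vecMulVec (c i).2.1 (c i).2.2)

theorem monotone_range_sumPTransVecMulVec :
    Monotone fun r => Set.range (sumPTransVecMulVec F n d r) := by
  refine monotone_nat_of_le_succ fun r => ?_
  rintro _ ⟨c, rfl⟩
  exact ⟨Fin.cons (∅, 0, 0) c, by simp [sumPTransVecMulVec, Fin.sum_univ_succ]⟩

theorem mem_range_sumPTransVecMulVec_of_PTrank_le {M : Matrix (Fin d → Fin n) (Fin d → Fin n) F}
    {r : ℕ} (h : PTrank M ≤ r) : M ∈ Set.range (sumPTransVecMulVec F n d r) := by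
  refine monotone_range_sumPTransVecMulVec h ?_
  obtain ⟨P, hP, hM⟩ := exists_sum_isPTBasic_PTrank M
  choose κ u v huv using fun i => (hP i).exists_eq_ptrans_vecMulVec
  refine ⟨fun i => (κ i, u i, v i), ?_⟩
  simpa [sumPTransVecMulVec, ← huv] using hM.symm

end PTrank

theorem card_PTrank_le_le_pow {F : Type*} [Field F] [Fintype F] (n d r : ℕ) :
    Nat.card {M : Matrix (Fin d → Fin n) (Fin d → Fin n) F // PTrank M ≤ r} ≤
      Fintype.card F ^ ((d + 2 * n ^ d) * r) := by
  have hq : 2 ≤ Fintype.card F := Fintype.one_lt_card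
  calc Nat.card {M : Matrix (Fin d → Fin n) (Fin d → Fin n) F // PTrank M ≤ r}
      ≤ Nat.card (Set.range (sumPTransVecMulVec F n d r)) :=
        Nat.card_mono (Set.toFinite _) fun _ => mem_range_sumPTransVecMulVec_of_PTrank_le
    _ ≤ Nat.card (Fin r → Finset (Fin d) × ((Fin d → Fin n) → F) × ((Fin d → Fin n) → F)) :=
        Finite.card_range_le _
    _ = (2 ^ d * (Fintype.card F ^ n ^ d * Fintype.card F ^ n ^ d)) ^ r := by
        simp [Nat.card_eq_fintype_card, Fintype.card_finset]
    _ ≤ (Fintype.card F ^ d * (Fintype.card F ^ n ^ d * Fintype.card F ^ n ^ d)) ^ r := by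
        gcongr
    _ = Fintype.card F ^ ((d + 2 * n ^ d) * r) := by ring

theorem card_PTrank_le_real_le_rpow {F : Type*} [Field F] [Fintype F] (n d : ℕ) {x : ℝ}
    (hx : 0 ≤ x) :
    (Nat.card {M : Matrix (Fin d → Fin n) (Fin d → Fin n) F // (PTrank M : ℝ) ≤ x} : ℝ) ≤
      (Fintype.card F : ℝ) ^ ((d + 2 * (n : ℝ) ^ d) * x) := by
  have hq : (1 : ℝ) ≤ Fintype.card F := by exact_mod_cast Fintype.card_pos
  calc (Nat.card {M : Matrix (Fin d → Fin n) (Fin d → Fin n) F // (PTrank M : ℝ) ≤ x} : ℝ)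
      ≤ Nat.card {M : Matrix (Fin d → Fin n) (Fin d → Fin n) F // PTrank M ≤ ⌊x⌋₊} := by
        exact_mod_cast Nat.card_mono (s := {M | (PTrank M : ℝ) ≤ x})
          (t := {M | PTrank M ≤ ⌊x⌋₊}) (Set.toFinite _) fun _ h => Nat.le_floor h
    _ ≤ (Fintype.card F : ℝ) ^ ((d + 2 * n ^ d) * ⌊x⌋₊) := by
        exact_mod_cast card_PTrank_le_le_pow n d ⌊x⌋₊
    _ = (Fintype.card F : ℝ) ^ ((d + 2 * (n : ℝ) ^ d) * ⌊x⌋₊) := by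
        rw [← Real.rpow_natCast]; push_cast; rfl
    _ ≤ (Fintype.card F : ℝ) ^ ((d + 2 * (n : ℝ) ^ d) * x) :=
        Real.rpow_le_rpow_of_exponent_le hq (by gcongr; exact Nat.floor_le hx)

theorem card_PTrank_le_div_card_le_rpow {F : Type*} [Field F] [Fintype F] (n d : ℕ) {δ : ℝ}
    (hδ₀ : 0 ≤ δ) (hδ : δ ≤ 1 / 2) :
    (Nat.card {M : Matrix (Fin d → Fin n) (Fin d → Fin n) F //
        (PTrank M : ℝ) ≤ (1 / 2 - δ) * (n : ℝ) ^ d} : ℝ) / (Fintype.card F : ℝ) ^ (n ^ (2 * d)) ≤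
      (Fintype.card F : ℝ) ^ (d * (n : ℝ) ^ d - 2 * δ * ((n : ℝ) ^ d) ^ 2) := by
  set N : ℝ := (n : ℝ) ^ d
  have hN : 0 ≤ N := by positivity
  have hq : (1 : ℝ) ≤ Fintype.card F := by exact_mod_cast Fintype.card_pos
  have hdenom : (Fintype.card F : ℝ) ^ (n ^ (2 * d)) = (Fintype.card F : ℝ) ^ (N ^ 2) := by
    rw [← Real.rpow_natCast]; push_cast; rw [pow_mul']
  calc _ ≤ (Fintype.card F : ℝ) ^ ((d + 2 * N) * ((1 / 2 - δ) * N)) /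
        (Fintype.card F : ℝ) ^ (N ^ 2) := by
        rw [hdenom]
        gcongr
        exact card_PTrank_le_real_le_rpow n d (by nlinarith)
    _ = (Fintype.card F : ℝ) ^ ((d + 2 * N) * ((1 / 2 - δ) * N) - N ^ 2) :=
        (Real.rpow_sub (by linarith) _ _).symm
    _ ≤ (Fintype.card F : ℝ) ^ (d * N - 2 * δ * N ^ 2) :=
        Real.rpow_le_rpow_of_exponent_le hq (by nlinarith [mul_nonneg (Nat.cast_nonneg d) hN])

theorem tendsto_mul_sub_mul_sq_atBot (a : ℝ) {b : ℝ} (hb : 0 < b) :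
    Tendsto (fun x : ℝ => a * x - b * x ^ 2) atTop atBot := by
  have : Tendsto (fun x : ℝ => x * (a + -b * x)) atTop atBot :=
    tendsto_id.atTop_mul_atBot₀ <|
      tendsto_atBot_add_const_left _ a (tendsto_id.const_mul_atTop_of_neg (by linarith))
  exact this.congr fun x => by ring

open Filter in
/-- Over a finite field `F`, for every constant `ε > 0` the fraction of `n^d × n^d`
matrices with PT-rank at most `(1/2 − ε)·n^d` tends to `0` as `n → ∞`. -/
theorem stmt10 {F : Type*} [Field F] [Fintype F] (d : ℕ) (hd : 1 ≤ d)
    (ε : ℝ) (hε : 0 < ε) :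
    Tendsto (fun n : ℕ =>
      (Nat.card {M : Matrix (Fin d → Fin n) (Fin d → Fin n) F //
          (PTrank M : ℝ) ≤ (1 / 2 - ε) * (n : ℝ) ^ d} : ℝ) /
        (Fintype.card F : ℝ) ^ (n ^ (2 * d)))
      atTop (nhds 0) := by
  -- Capping `ε` at `1/2` keeps the rank threshold `(1/2 - δ) n^d` nonnegative.
  set δ := min ε (1 / 2)
  have hq : (1 : ℝ) < Fintype.card F := by exact_mod_cast Fintype.one_lt_card
  have hN : Tendsto (fun n : ℕ => (n : ℝ) ^ d) atTop atTop :=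
    (tendsto_pow_atTop (by omega)).comp tendsto_natCast_atTop_atTop
  have hbound : Tendsto (fun n : ℕ => (Fintype.card F : ℝ) ^
      (d * (n : ℝ) ^ d - 2 * δ * ((n : ℝ) ^ d) ^ 2)) atTop (nhds 0) :=
    (tendsto_rpow_atBot_of_base_gt_one _ hq).comp <|
      (tendsto_mul_sub_mul_sq_atBot d (by positivity)).comp hN
  refine tendsto_of_tendsto_of_tendsto_of_le_of_le tendsto_const_nhds hbound
    (fun n => by positivity) fun n => ?_
  have hsub : Nat.card {M : Matrix (Fin d → Fin n) (Fin d → Fin n) F //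
        (PTrank M : ℝ) ≤ (1 / 2 - ε) * (n : ℝ) ^ d} ≤
      Nat.card {M : Matrix (Fin d → Fin n) (Fin d → Fin n) F //
        (PTrank M : ℝ) ≤ (1 / 2 - δ) * (n : ℝ) ^ d} :=
    Nat.card_mono (Set.toFinite _) fun M (hM : (PTrank M : ℝ) ≤ _) =>
      hM.trans (by gcongr; exact min_le_left _ _)
  exact (div_le_div_of_nonneg_right (Nat.cast_le.mpr hsub) (by positivity)).trans
    (card_PTrank_le_div_card_le_rpow n d (by positivity) (min_le_right _ _))
end

section
/- For every n^d × n^d matrix M over a field F, the non-commutative set-multilinear formula size of the shifted tensor of M is at least PT-rank(M) / n^{d − log₂ d + 1}. -/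
open Matrix BigOperators

/-- Order-preserving tensor product of a tensor on the first `e` coordinates with a tensor
on the last `f` coordinates, `e + f = k`. -/
def splitMul {F : Type*} [Field F] (m e f k : ℕ) (h : e + f = k)
    (B : (Fin e → Fin m) → F) (C : (Fin f → Fin m) → F) : (Fin k → Fin m) → F :=
  fun x => B (fun t => x ⟨(t : ℕ), by have := t.isLt; omega⟩) *
    C (fun t => x ⟨e + (t : ℕ), by have := t.isLt; omega⟩)

open Classical in
/-- `HasNCF F m k A s`: the tensor `A : [m]^k → F` has a non-commutative set-multilinear
formula with `s` leaves — i.e. `s` is an achievable value of the inductively defined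
non-commutative set-multilinear formula size. -/
inductive HasNCF (F : Type*) [Field F] (m : ℕ) : (k : ℕ) → ((Fin k → Fin m) → F) → ℕ → Prop
  | leaf (A : (Fin 1 → Fin m) → F) : HasNCF F m 1 A (if A = 0 then 0 else 1)
  | node {k : ℕ} (hk : 2 ≤ k) {N : ℕ} (e f : Fin N → ℕ) (he : ∀ i, 1 ≤ e i)
      (hf : ∀ i, 1 ≤ f i) (hef : ∀ i, e i + f i = k)
      (B : (i : Fin N) → (Fin (e i) → Fin m) → F)
      (C : (i : Fin N) → (Fin (f i) → Fin m) → F)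
      (s t : Fin N → ℕ)
      (hB : ∀ i, HasNCF F m (e i) (B i) (s i))
      (hC : ∀ i, HasNCF F m (f i) (C i) (t i))
      (A : (Fin k → Fin m) → F)
      (hA : A = ∑ i, splitMul m (e i) (f i) k (hef i) (B i) (C i)) :
      HasNCF F m k A (∑ i, (s i + t i))

/-- The non-commutative set-multilinear formula size of a tensor `A : [m]^k → F`. -/
noncomputable def Lnc (F : Type*) [Field F] (m k : ℕ) (A : (Fin k → Fin m) → F) : ℕ :=
  sInf { s | HasNCF F m k A s }

/-- The shifted tensor of an `n^d × n^d` matrix `M`: the order-`(d+1)` tensor on `[n²]`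
with `ShiftedTensor(M)(⟨p,i_1⟩, ⟨j_1,i_2⟩, …, ⟨j_d,q⟩) = 1[p = q = 1] · M_{i⃗,j⃗}`,
using the pairing bijection `Fin n × Fin n ≃ Fin (n*n)`. -/
noncomputable def shifted {F : Type*} [Field F] {n d : ℕ} [NeZero n]
    (M : Matrix (Fin d → Fin n) (Fin d → Fin n) F) : (Fin (d + 1) → Fin (n * n)) → F :=
  fun y =>
    if (finProdFinEquiv.symm (y 0)).1 = 0 ∧ (finProdFinEquiv.symm (y (Fin.last d))).2 = 0
    then
      M (fun k => (finProdFinEquiv.symm (y (Fin.castSucc k))).2)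
        (fun k => (finProdFinEquiv.symm (y k.succ)).1)
    else 0

/-!
Split every coordinate of `[n²]^k` into its two halves in `[n]`, the first half of coordinate `t`
sitting at boundary point `t` and the second at point `t + 1`. A cut `c : Fin (k + 1) → Bool`
puts every boundary point on a side, the two halves meeting at a point on opposite sides, and a
cut product is `u · v` with `u` reading only the halves on side `true` and `v` only those on side
`false`. For the shifted tensor the halves meeting at point `a + 1` are `i_a` and `j_a`, so a cut
product restricts to a matrix some partial transpose of which has rank at most one: a sum of `r`
cut products has PT-rank at most `r`.

Every order-`k` tensor is a sum of `n^(k-1)` cut products with prescribed, different sides at the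
two ends (sum over the first halves of coordinates `1, …, k - 1`), and cut products whose sides
agree at the seam multiply along `A = ∑ Bᵢ ⊗ Cᵢ`. Writing the shorter factor in this way and
recursing into the longer one, of order at least `k / 2`, a formula with `L` leaves turns into a sum
of `L · n^(k - ⌈log₂ k⌉)` cut products.
-/

open Function

theorem Function.Injective.extend_comp_self {ι κ α : Type*} {j : κ → ι} (hj : Injective j)
    (y : ι → α) : extend j (y ∘ j) y = y := by
  funext i
  by_cases h : ∃ a, j a = i
  · obtain ⟨a, rfl⟩ := h
    exact hj.extend_apply _ _ a
  · exact extend_apply' _ _ _ h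

lemma eq_sum_extend_mul_indicator {ι κ α R : Type*} [Fintype κ] [Fintype α] [DecidableEq κ]
    [DecidableEq α] [CommSemiring R] {j : κ → ι} (hj : Injective j) (g : (ι → α) → R)
    (y : ι → α) : g y = ∑ a : κ → α, g (extend j a y) * if y ∘ j = a then 1 else 0 := by
  rw [Fintype.sum_eq_single (y ∘ j) fun a ha => by simp [Ne.symm ha]]
  simp [hj.extend_comp_self]

lemma dependsOn_extend {ι κ α β : Type*} {j : κ → ι} (g : (ι → α) → β) (a : κ → α) :
    DependsOn (fun y => g (extend j a y)) (Set.range j)ᶜ := by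
  intro y y' h
  classical
  refine congrArg g (funext fun i => ?_)
  rw [extend_def, extend_def]
  split_ifs with hi
  · rfl
  · exact h i fun ⟨t, ht⟩ => hi ⟨t, ht⟩

lemma dependsOn_indicator_comp {ι κ α R : Type*} [Zero R] [One R] (j : κ → ι) (a : κ → α)
    [DecidableEq (κ → α)] :
    DependsOn (fun y : ι → α => if y ∘ j = a then (1 : R) else 0) (Set.range j) := by
  intro y y' h
  have : y ∘ j = y' ∘ j := funext fun t => h (j t) ⟨t, rfl⟩
  simp only [this]

lemma DependsOn.precomp {ι ι' α β : Type*} {u : (ι → α) → β} {s : Set ι} (hu : DependsOn u s)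
    (g : ι → ι') : DependsOn (fun y : ι' → α => u (y ∘ g)) (g '' s) :=
  fun _ _ h => hu fun i hi => h (g i) ⟨i, hi, rfl⟩

lemma DependsOn.mul {ι α β : Type*} [Mul β] {u v : (ι → α) → β} {s : Set ι}
    (hu : DependsOn u s) (hv : DependsOn v s) : DependsOn (fun y => u y * v y) s :=
  fun _ _ h => congrArg₂ (· * ·) (hu h) (hv h)

lemma Nat.clog_le_self {b : ℕ} (hb : 1 < b) (k : ℕ) : Nat.clog b k ≤ k :=
  Nat.clog_le_of_le_pow (Nat.lt_pow_self hb).le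

lemma sub_one_add_sub_clog_two_le {a b : ℕ} (ha : 1 ≤ a) (hab : a ≤ b) :
    a - 1 + (b - Nat.clog 2 b) ≤ a + b - Nat.clog 2 (a + b) := by
  have hpow := Nat.le_pow_clog one_lt_two b
  have h : Nat.clog 2 (a + b) ≤ Nat.clog 2 b + 1 :=
    Nat.clog_le_of_le_pow (by rw [pow_succ]; omega)
  have := Nat.clog_le_self one_lt_two b
  omega

section Cuts

variable {n k : ℕ}

def halves : (Fin k → Fin (n * n)) ≃ (Fin k ⊕ Fin k → Fin n) :=
  (Equiv.arrowCongr (Equiv.refl _) finProdFinEquiv.symm).trans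
    ((Equiv.arrowProdEquivProdArrow _ _ _).trans (Equiv.sumArrowEquivProdArrow _ _ _).symm)

@[simp] lemma halves_inl (x : Fin k → Fin (n * n)) (t : Fin k) :
    halves x (.inl t) = (finProdFinEquiv.symm (x t)).1 := rfl

@[simp] lemma halves_inr (x : Fin k → Fin (n * n)) (t : Fin k) :
    halves x (.inr t) = (finProdFinEquiv.symm (x t)).2 := rfl

def cutSide (c : Fin (k + 1) → Bool) : Fin k ⊕ Fin k → Bool :=
  Sum.elim (fun t => c t.castSucc) (fun t => !c t.succ)

variable {R : Type*} [CommSemiring R]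

def IsCutProduct (c : Fin (k + 1) → Bool) (P : (Fin k → Fin (n * n)) → R) : Prop :=
  ∃ u v : (Fin k ⊕ Fin k → Fin n) → R, DependsOn u {p | cutSide c p = true} ∧
    DependsOn v {p | cutSide c p = false} ∧ ∀ x, P x = u (halves x) * v (halves x)

def IsCutSum (σ τ : Bool) (X : (Fin k → Fin (n * n)) → R) (r : ℕ) : Prop :=
  ∃ s : Multiset ((Fin k → Fin (n * n)) → R), Multiset.card s ≤ r ∧
    (∀ P ∈ s, ∃ c : Fin (k + 1) → Bool, c 0 = σ ∧ c (Fin.last k) = τ ∧ IsCutProduct c P) ∧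
    s.sum = X

lemma isCutProduct_of_dependsOn {c : Fin (k + 1) → Bool} (w : Bool)
    {u v : (Fin k ⊕ Fin k → Fin n) → R} (hu : DependsOn u {p | cutSide c p = w})
    (hv : DependsOn v {p | cutSide c p = !w}) :
    IsCutProduct c (fun x => u (halves x) * v (halves x)) := by
  cases w
  · exact ⟨v, u, hv, hu, fun x => mul_comm _ _⟩
  · exact ⟨u, v, hu, hv, fun x => rfl⟩

lemma isCutSum_zero (σ τ : Bool) : IsCutSum σ τ (0 : (Fin k → Fin (n * n)) → R) 0 :=
  ⟨0, le_rfl, by simp, Multiset.sum_zero⟩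

namespace IsCutSum

variable {σ τ : Bool} {X Y : (Fin k → Fin (n * n)) → R} {r r' : ℕ}

lemma mono (h : IsCutSum σ τ X r) (hr : r ≤ r') : IsCutSum σ τ X r' :=
  let ⟨s, hs, hP, hX⟩ := h
  ⟨s, hs.trans hr, hP, hX⟩

lemma add (hX : IsCutSum σ τ X r) (hY : IsCutSum σ τ Y r') : IsCutSum σ τ (X + Y) (r + r') := by
  obtain ⟨s, hs, hsP, rfl⟩ := hX
  obtain ⟨t, ht, htP, rfl⟩ := hY
  refine ⟨s + t, by simpa using add_le_add hs ht, fun P hP => ?_, Multiset.sum_add _ _⟩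
  rcases Multiset.mem_add.mp hP with hP | hP
  exacts [hsP P hP, htP P hP]

lemma sum {ι : Type*} (I : Finset ι) {X : ι → (Fin k → Fin (n * n)) → R} {r : ι → ℕ}
    (h : ∀ i ∈ I, IsCutSum σ τ (X i) (r i)) :
    IsCutSum σ τ (∑ i ∈ I, X i) (∑ i ∈ I, r i) := by
  classical
  induction I using Finset.induction_on with
  | empty => exact isCutSum_zero σ τ
  | insert i I hi ih =>
    rw [Finset.sum_insert hi, Finset.sum_insert hi]
    exact (h i (Finset.mem_insert_self i I)).add (ih fun j hj => h j (Finset.mem_insert_of_mem hj))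

end IsCutSum

lemma isCutSum_fintype_sum {ι : Type*} [Fintype ι] {σ τ : Bool}
    {P : ι → (Fin k → Fin (n * n)) → R}
    (hP : ∀ i, ∃ c : Fin (k + 1) → Bool, c 0 = σ ∧ c (Fin.last k) = τ ∧ IsCutProduct c (P i)) :
    IsCutSum σ τ (∑ i, P i) (Fintype.card ι) :=
  ⟨Finset.univ.val.map P, by simp, by simpa using hP, rfl⟩

lemma isCutSum_of_range_eq (c : Fin (k + 1) → Bool) (w : Bool) {κ : Type*} [Fintype κ]
    [DecidableEq κ] {j : κ → Fin k ⊕ Fin k} (hj : Injective j)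
    (hrange : Set.range j = {p | cutSide c p = !w}) (X : (Fin k → Fin (n * n)) → R) :
    IsCutSum (c 0) (c (Fin.last k)) X (n ^ Fintype.card κ) := by
  have hcompl : (Set.range j)ᶜ = {p | cutSide c p = w} := by
    ext p; cases w <;> simp [hrange]
  have hX : X = ∑ a : κ → Fin n, fun x => (X ∘ halves.symm) (extend j a (halves x)) *
      if halves x ∘ j = a then 1 else 0 := by
    funext x
    simpa using eq_sum_extend_mul_indicator hj (X ∘ halves.symm) (halves x)
  have hcard : n ^ Fintype.card κ = Fintype.card (κ → Fin n) := by simp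
  rw [hX, hcard]
  exact isCutSum_fintype_sum fun a => ⟨c, rfl, rfl, isCutProduct_of_dependsOn w
    (hcompl ▸ dependsOn_extend _ a) (hrange ▸ dependsOn_indicator_comp j a)⟩

lemma isCutSum_self (σ : Bool) (X : (Fin k → Fin (n * n)) → R) : IsCutSum σ σ X (n ^ k) := by
  simpa using isCutSum_of_range_eq (fun _ => σ) σ Sum.inr_injective
    (by ext p; cases p <;> simp [cutSide]) X

lemma isCutSum_of_ne {σ τ : Bool} (h : σ ≠ τ) (hk : 0 < k) (X : (Fin k → Fin (n * n)) → R) :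
    IsCutSum σ τ X (n ^ (k - 1)) := by
  obtain ⟨k, rfl⟩ : ∃ k', k = k' + 1 := ⟨k - 1, by omega⟩
  have hrange : Set.range (Sum.inl ∘ (Fin.succ : Fin k → Fin (k + 1))) =
      {p | cutSide (Fin.cons σ fun _ => τ) p = !!τ} := by
    ext p
    rcases p with t | t
    · induction t using Fin.cases <;> simp [cutSide, h]
    · simp [cutSide]
  simpa [← Fin.succ_last] using
    isCutSum_of_range_eq _ _ (Sum.inl_injective.comp (Fin.succ_injective _)) hrange X

end Cuts

section Glue

variable {e f : ℕ} {c : Fin (e + 1) → Bool} {c' : Fin (f + 1) → Bool}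

def glue (c : Fin (e + 1) → Bool) (c' : Fin (f + 1) → Bool) : Fin (e + f + 1) → Bool :=
  Fin.append (m := e) (n := f + 1) (Fin.init c) c'

lemma glue_castLE (h : c (Fin.last e) = c' 0) (i : Fin (e + 1)) :
    glue c c' (Fin.castLE (by omega) i) = c i := by
  induction i using Fin.lastCases with
  | last =>
    rw [show (Fin.castLE _ (Fin.last e) : Fin (e + f + 1)) = Fin.natAdd e (0 : Fin (f + 1)) from
      Fin.ext (by simp)]
    exact (Fin.append_right _ _ _).trans h.symm
  | cast j => exact Fin.append_left _ _ j

lemma glue_natAdd (j : Fin (f + 1)) : glue c c' (Fin.natAdd e j) = c' j :=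
  Fin.append_right _ _ j

lemma cutSide_glue_castAdd (h : c (Fin.last e) = c' 0) (p : Fin e ⊕ Fin e) :
    cutSide (glue c c') (Sum.map (Fin.castAdd f) (Fin.castAdd f) p) = cutSide c p := by
  rcases p with t | t
  · exact glue_castLE h t.castSucc
  · exact congrArg (!·) (glue_castLE h t.succ)

lemma cutSide_glue_natAdd (p : Fin f ⊕ Fin f) :
    cutSide (glue c c') (Sum.map (Fin.natAdd e) (Fin.natAdd e) p) = cutSide c' p := by
  rcases p with t | t
  · exact glue_natAdd (c := c) t.castSucc
  · exact congrArg (!·) (glue_natAdd (c := c) t.succ)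

end Glue

section SplitMul

variable {F : Type*} [Field F] {n e f k : ℕ}

lemma IsCutProduct.splitMul (hk : e + f = k) {c : Fin (e + 1) → Bool} {c' : Fin (f + 1) → Bool}
    {P : (Fin e → Fin (n * n)) → F} {Q : (Fin f → Fin (n * n)) → F}
    (hP : IsCutProduct c P) (hQ : IsCutProduct c' Q) (h : c (Fin.last e) = c' 0) :
    ∃ c'' : Fin (k + 1) → Bool, c'' 0 = c 0 ∧ c'' (Fin.last k) = c' (Fin.last f) ∧
      IsCutProduct c'' (splitMul (n * n) e f k hk P Q) := by
  subst hk
  obtain ⟨u, v, hu, hv, hP⟩ := hP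
  obtain ⟨u', v', hu', hv', hQ⟩ := hQ
  have hside : ∀ w, Sum.map (Fin.castAdd f) (Fin.castAdd f) '' {p | cutSide c p = w} ∪
      Sum.map (Fin.natAdd e) (Fin.natAdd e) '' {p | cutSide c' p = w} ⊆
      {p | cutSide (glue c c') p = w} := by
    rintro w _ (⟨p, hp, rfl⟩ | ⟨p, hp, rfl⟩)
    · simpa [cutSide_glue_castAdd h] using hp
    · simpa [cutSide_glue_natAdd] using hp
  refine ⟨glue c c', glue_castLE h 0, glue_natAdd (Fin.last f),
    fun y => u (y ∘ Sum.map (Fin.castAdd f) (Fin.castAdd f)) *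
      u' (y ∘ Sum.map (Fin.natAdd e) (Fin.natAdd e)),
    fun y => v (y ∘ Sum.map (Fin.castAdd f) (Fin.castAdd f)) *
      v' (y ∘ Sum.map (Fin.natAdd e) (Fin.natAdd e)),
    (((hu.precomp _).mono Set.subset_union_left).mul
      ((hu'.precomp _).mono Set.subset_union_right)).mono (hside true),
    (((hv.precomp _).mono Set.subset_union_left).mul
      ((hv'.precomp _).mono Set.subset_union_right)).mono (hside false), fun x => ?_⟩
  simp only [_root_.splitMul, hP, hQ]
  have hfront : halves (fun t : Fin e => x ⟨t, by omega⟩) =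
      halves x ∘ Sum.map (Fin.castAdd f) (Fin.castAdd f) := by
    funext p; rcases p <;> rfl
  have hback : halves (fun t : Fin f => x ⟨e + t, by omega⟩) =
      halves x ∘ Sum.map (Fin.natAdd e) (Fin.natAdd e) := by
    funext p; rcases p <;> rfl
  rw [hfront, hback]
  ring

lemma IsCutSum.splitMul (hk : e + f = k) {σ ρ τ : Bool} {B : (Fin e → Fin (n * n)) → F}
    {C : (Fin f → Fin (n * n)) → F} {r r' : ℕ} (hB : IsCutSum σ ρ B r)
    (hC : IsCutSum ρ τ C r') : IsCutSum σ τ (splitMul (n * n) e f k hk B C) (r * r') := by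
  obtain ⟨s, hs, hsP, rfl⟩ := hB
  obtain ⟨t, ht, htP, rfl⟩ := hC
  refine ⟨s.bind fun P => t.map fun Q => _root_.splitMul (n * n) e f k hk P Q, ?_, ?_, ?_⟩
  · simpa [Multiset.card_bind] using Nat.mul_le_mul hs ht
  · simp only [Multiset.mem_bind, Multiset.mem_map]
    rintro _ ⟨P, hP, Q, hQ, rfl⟩
    obtain ⟨c, hc0, hcl, hPc⟩ := hsP P hP
    obtain ⟨c', hc'0, hc'l, hQc'⟩ := htP Q hQ
    obtain ⟨c'', h0, hl, hc''⟩ := hPc.splitMul hk hQc' (hcl.trans hc'0.symm)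
    exact ⟨c'', h0.trans hc0, hl.trans hc'l, hc''⟩
  · funext x
    rw [Pi.multiset_sum_apply, Multiset.map_bind, Multiset.sum_bind]
    simp only [Multiset.map_map, comp_def, _root_.splitMul, Pi.multiset_sum_apply,
      Multiset.sum_map_mul_left, Multiset.sum_map_mul_right]

end SplitMul

section FormulaSize

variable {F : Type*} [Field F]

theorem HasNCF.isCutSum {n : ℕ} [NeZero n] {k : ℕ} {X : (Fin k → Fin (n * n)) → F} {s : ℕ}
    (h : HasNCF F (n * n) k X s) (σ τ : Bool) :
    IsCutSum σ τ X (s * n ^ (k - Nat.clog 2 k)) := by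
  induction h generalizing σ τ with
  | leaf A =>
    split_ifs with hA
    · simpa [hA] using isCutSum_zero σ τ
    · rw [one_mul, Nat.clog_one_right]
      by_cases hστ : σ = τ
      · exact hστ ▸ isCutSum_self σ A
      · exact (isCutSum_of_ne hστ one_pos A).mono (by simpa using NeZero.one_le)
  | node _ e f he hf hef B C s t _ _ A hA ihB ihC =>
    subst hA
    rw [Finset.sum_mul]
    refine IsCutSum.sum _ fun i _ => ?_
    rcases le_total (e i) (f i) with hle | hle
    · refine ((isCutSum_of_ne (Bool.not_ne_self σ).symm (he i) (B i)).splitMul (hef i)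
        (ihC i (!σ) τ)).mono ?_
      calc n ^ (e i - 1) * (t i * n ^ (f i - Nat.clog 2 (f i)))
          = t i * n ^ (e i - 1 + (f i - Nat.clog 2 (f i))) := by ring
        _ ≤ (s i + t i) * n ^ (e i + f i - Nat.clog 2 (e i + f i)) :=
          Nat.mul_le_mul (by omega) (Nat.pow_le_pow_right NeZero.one_le
            (sub_one_add_sub_clog_two_le (he i) hle))
        _ = _ := by rw [hef i]
    · refine ((ihB i σ (!τ)).splitMul (hef i)
        (isCutSum_of_ne (Bool.not_ne_self τ) (hf i) (C i))).mono ?_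
      calc s i * n ^ (e i - Nat.clog 2 (e i)) * n ^ (f i - 1)
          = s i * n ^ (f i - 1 + (e i - Nat.clog 2 (e i))) := by ring
        _ ≤ (s i + t i) * n ^ (f i + e i - Nat.clog 2 (f i + e i)) :=
          Nat.mul_le_mul (by omega) (Nat.pow_le_pow_right NeZero.one_le
            (sub_one_add_sub_clog_two_le (hf i) hle))
        _ = _ := by rw [add_comm (f i), hef i]

end FormulaSize

theorem exists_hasNCF {F : Type*} [Field F] (m : ℕ) {k : ℕ} (hk : 1 ≤ k) :
    ∀ A : (Fin k → Fin m) → F, ∃ s, HasNCF F m k A s := by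
  classical
  induction k, hk using Nat.le_induction with
  | base => exact fun A => ⟨_, .leaf A⟩
  | succ k hk ih =>
    intro A
    choose s hs using fun c => ih fun x => A (Fin.cons c x)
    refine ⟨_, .node (by omega) (fun _ => 1) (fun _ => k) (fun _ => le_rfl) (fun _ => hk)
      (fun _ => add_comm 1 k) (fun c x => if x 0 = c then 1 else 0)
      (fun c x => A (Fin.cons c x)) _ s (fun c => .leaf _) hs A ?_⟩
    funext x
    have htail : (fun t : Fin k => x ⟨1 + t, by omega⟩) = Fin.tail x :=
      funext fun t => congrArg x (Fin.ext (add_comm 1 t.val))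
    simp [splitMul, Finset.sum_apply, htail]

section Extraction

variable {F : Type*} [Field F] {n d : ℕ}

lemma ptrans_ptrans (κ : Finset (Fin d)) (M : Matrix (Fin d → Fin n) (Fin d → Fin n) F) :
    ptrans κ (ptrans κ M) = M := by
  ext i j
  simp only [ptrans]
  congr 1 <;> funext a <;> by_cases ha : a ∈ κ <;> simp [ha]

lemma Matrix.eq_zero_of_rank_eq_zero_s16 {R ι ι' : Type*} [CommRing R] [IsDomain R] [Fintype ι']
    [DecidableEq ι'] {A : Matrix ι ι' R} (h : A.rank = 0) : A = 0 := by
  rw [Matrix.rank, Submodule.finrank_eq_zero, LinearMap.range_eq_bot, ← Matrix.toLin'_apply',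
    LinearEquiv.map_eq_zero_iff] at h
  exact h

lemma eq_zero_or_isPTBasic_of_rank_ptrans_le_one {M : Matrix (Fin d → Fin n) (Fin d → Fin n) F}
    (κ : Finset (Fin d)) (h : (ptrans κ M).rank ≤ 1) : M = 0 ∨ IsPTBasic M := by
  rcases Nat.le_one_iff_eq_zero_or_eq_one.mp h with h0 | h1
  · left
    rw [← ptrans_ptrans κ M, Matrix.eq_zero_of_rank_eq_zero_s16 h0]
    rfl
  · exact Or.inr ⟨κ, h1⟩

lemma ptrank_sum_le_card (s : Multiset (Matrix (Fin d → Fin n) (Fin d → Fin n) F))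
    (hs : ∀ N ∈ s, N = 0 ∨ IsPTBasic N) : PTrank s.sum ≤ Multiset.card s := by
  classical
  set l := (s.filter (· ≠ 0)).toList
  have hmem : ∀ N ∈ l, N ∈ s ∧ N ≠ 0 := by simp [l]
  have hsum : s.sum = ∑ i, l.get i := by
    have hzero : (s.filter fun N => ¬N ≠ 0).sum = 0 := Multiset.sum_eq_zero (by simp)
    rw [← List.sum_ofFn, List.ofFn_get, Multiset.sum_toList]
    conv_lhs => rw [← Multiset.filter_add_not (· ≠ 0) s]
    rw [Multiset.sum_add, hzero, add_zero]
  calc PTrank s.sum ≤ l.length :=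
        Nat.sInf_le ⟨l.get, fun i => ((hs _ (hmem _ (l.get_mem i)).1).resolve_left
          (hmem _ (l.get_mem i)).2), hsum⟩
    _ ≤ Multiset.card s := by
        simpa [l] using Multiset.card_le_card (Multiset.filter_le _ s)

variable [NeZero n]

def shiftedPoint (i j : Fin d → Fin n) : Fin (d + 1) → Fin (n * n) :=
  halves.symm (Sum.elim (Fin.cons 0 j) (Fin.snoc i 0))

lemma halves_shiftedPoint (i j : Fin d → Fin n) :
    halves (shiftedPoint i j) = Sum.elim (Fin.cons 0 j) (Fin.snoc i 0) :=
  Equiv.apply_symm_apply _ _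

lemma shifted_shiftedPoint (M : Matrix (Fin d → Fin n) (Fin d → Fin n) F) (i j : Fin d → Fin n) :
    shifted M (shiftedPoint i j) = M i j := by
  have h1 (t) : (finProdFinEquiv.symm (shiftedPoint i j t)).1 =
      Fin.cons (α := fun _ => Fin n) 0 j t := congrFun (halves_shiftedPoint i j) (.inl t)
  have h2 (t) : (finProdFinEquiv.symm (shiftedPoint i j t)).2 =
      Fin.snoc (α := fun _ => Fin n) i 0 t := congrFun (halves_shiftedPoint i j) (.inr t)
  simp only [shifted, h1, h2]
  simp

/-- The halves of `shiftedPoint i j` meeting at point `a + 1` are `i a` and `j a`; these are the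
`a` at which `j a` lies on side `true`. -/
def cutIndices (c : Fin (d + 2) → Bool) : Finset (Fin d) :=
  Finset.univ.filter fun a => c a.succ.castSucc

lemma halves_shiftedPoint_ptrans {c : Fin (d + 2) → Bool} {w : Bool}
    {p : Fin (d + 1) ⊕ Fin (d + 1)} (hp : cutSide c p = w) (i j : Fin d → Fin n) :
    halves (shiftedPoint (fun a => if a ∈ cutIndices c then j a else i a)
      (fun a => if a ∈ cutIndices c then i a else j a)) p =
      halves (shiftedPoint (cond w i j) (cond w i j)) p := by
  rw [halves_shiftedPoint, halves_shiftedPoint]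
  rcases p with t | t
  · induction t using Fin.cases with
    | zero => rfl
    | succ a => cases w <;> simp_all [cutSide, cutIndices]
  · induction t using Fin.lastCases with
    | last => simp
    | cast a => cases w <;> simp_all [cutSide, cutIndices]

lemma IsCutProduct.ptrans_eq_vecMulVec {c : Fin (d + 2) → Bool}
    {P : (Fin (d + 1) → Fin (n * n)) → F} (hP : IsCutProduct c P) :
    ∃ U V, ptrans (cutIndices c) (Matrix.of fun i j => P (shiftedPoint i j)) = vecMulVec U V := by
  obtain ⟨u, v, hu, hv, hP⟩ := hP
  refine ⟨fun i => u (halves (shiftedPoint i i)), fun j => v (halves (shiftedPoint j j)), ?_⟩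
  ext i j
  simp only [ptrans, of_apply, vecMulVec_apply, hP]
  exact congrArg₂ (· * ·) (hu fun p hp => halves_shiftedPoint_ptrans hp i j)
    (hv fun p hp => halves_shiftedPoint_ptrans hp i j)

lemma IsCutSum.ptrank_le {σ τ : Bool} {M : Matrix (Fin d → Fin n) (Fin d → Fin n) F} {r : ℕ}
    (h : IsCutSum σ τ (shifted M) r) : PTrank M ≤ r := by
  obtain ⟨s, hs, hP, hsum⟩ := h
  let toMatrix : ((Fin (d + 1) → Fin (n * n)) → F) →+ Matrix (Fin d → Fin n) (Fin d → Fin n) F :=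
    AddMonoidHom.mk' (fun P => Matrix.of fun i j => P (shiftedPoint i j)) fun _ _ => rfl
  have hM : M = (s.map toMatrix).sum := by
    rw [← map_multiset_sum, hsum]
    ext i j
    exact (shifted_shiftedPoint M i j).symm
  refine hM ▸ (ptrank_sum_le_card _ ?_).trans ((Multiset.card_map _ _).trans_le hs)
  simp only [Multiset.mem_map]
  rintro _ ⟨P, hPs, rfl⟩
  obtain ⟨c, -, -, hc⟩ := hP P hPs
  obtain ⟨U, V, hUV⟩ := hc.ptrans_eq_vecMulVec
  exact eq_zero_or_isPTBasic_of_rank_ptrans_le_one _ (hUV ▸ rank_vecMulVec_le U V)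

end Extraction

lemma pow_sub_clog_le_rpow_sub_logb {x : ℝ} (hx : 1 ≤ x) (d : ℕ) :
    x ^ (d + 1 - Nat.clog 2 (d + 1)) ≤ x ^ ((d : ℝ) - Real.logb 2 d + 1) := by
  have hlog : Real.logb 2 d ≤ Nat.clog 2 (d + 1) := by
    have := Real.natCeil_logb_natCast 2 d
    push_cast at this
    exact (Nat.le_ceil _).trans (this ▸ Nat.cast_le.mpr (Nat.clog_mono_right 2 d.le_succ))
  rw [← Real.rpow_natCast, Nat.cast_sub (Nat.clog_le_self one_lt_two _)]
  exact Real.rpow_le_rpow_of_exponent_le hx (by push_cast; linarith)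

theorem stmt16_general {F : Type*} [Field F] (n d : ℕ) [NeZero n]
    (M : Matrix (Fin d → Fin n) (Fin d → Fin n) F) :
    (PTrank M : ℝ) / (n : ℝ) ^ ((d : ℝ) - Real.logb 2 d + 1) ≤
      (Lnc F (n * n) (d + 1) (shifted M) : ℝ) := by
  obtain ⟨s, hs⟩ := exists_hasNCF (F := F) (n * n) d.succ_pos (shifted M)
  have hLnc : HasNCF F (n * n) (d + 1) (shifted M) (Lnc F (n * n) (d + 1) (shifted M)) :=
    Nat.sInf_mem ⟨s, hs⟩
  have hPT := (hLnc.isCutSum true true).ptrank_le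
  have hn : (1 : ℝ) ≤ n := by exact_mod_cast NeZero.one_le
  rw [div_le_iff₀ (Real.rpow_pos_of_pos (by linarith) _)]
  calc (PTrank M : ℝ)
      ≤ Lnc F (n * n) (d + 1) (shifted M) * (n : ℝ) ^ (d + 1 - Nat.clog 2 (d + 1)) := by
        exact_mod_cast hPT
    _ ≤ _ := mul_le_mul_of_nonneg_left (pow_sub_clog_le_rpow_sub_logb hn d) (Nat.cast_nonneg _)

/-- The non-commutative set-multilinear formula size of the shifted tensor of `M` is at
least `PT-rank(M) / n^{d − log₂ d + 1}`. -/
theorem stmt16 {F : Type*} [Field F] (n d : ℕ) [NeZero n] (hd : 1 ≤ d)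
    (M : Matrix (Fin d → Fin n) (Fin d → Fin n) F) :
    (PTrank M : ℝ) / (n : ℝ) ^ ((d : ℝ) - Real.logb 2 d + 1) ≤
      (Lnc F (n * n) (d + 1) (shifted M) : ℝ) :=
  stmt16_general n d M
end
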